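/- Let L₂ = {aᵐ·bⁿ·a² : m ≥ 3, n ≥ 1} over the alphabet {a, b}. Then the syntactic class of the one-letter word a with respect to L₂ is the singleton {a}: every nonempty word w over {a, b} that is syntactically equivalent to a with respect to L₂ equals a. -/

import Mathlib

/-- The two-letter alphabet `{a, b}`. -/
inductive AB : Type
  | a : AB
  | b : AB

/-- Words over `{a, b}`, as elements of the free monoid (the empty word is `1`). -/
abbrev Word : Type := FreeMonoid AB

/-- The letter `a` as a word. -/
def wa : Word := FreeMonoid.of AB.a

/-- The letter `b` as a word. -/
def wb : Word := FreeMonoid.of AB.b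

/-- Syntactic equivalence of `u` and `v` with respect to the language `L`:
for all (possibly empty) words `p, q`, `p·u·q ∈ L ↔ p·v·q ∈ L`. -/
def SynEq (L : Set Word) (u v : Word) : Prop :=
  ∀ p q : Word, p * u * q ∈ L ↔ p * v * q ∈ L

/-- The language `L₂ = a²a⁺b⁺a² = {aᵐ·bⁿ·a² : m ≥ 3, n ≥ 1}`. -/
def L2 : Set Word :=
  {w | ∃ m n : ℕ, 3 ≤ m ∧ 1 ≤ n ∧ w = wa ^ m * wb ^ n * wa ^ 2}

/-! If `w ~ a`, then `a³b·w·a ∈ L₂` (as `a³b·a·a` is), which forces `w = bⁿa`; and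
`a²·w·ba² ∈ L₂`, whose third letter must be `a` since every word of `L₂` begins with `a³`,
so `n = 0`. -/

open List

lemma FreeMonoid.toList_of_pow {α : Type*} (x : α) (n : ℕ) :
    (FreeMonoid.of x ^ n).toList = replicate n x := by
  induction n with
  | zero => rfl
  | succ k ih => rw [pow_succ, FreeMonoid.toList_mul, ih, FreeMonoid.toList_of, ← replicate_succ']

lemma mem_L2_iff (w : Word) :
    w ∈ L2 ↔ ∃ m n, 3 ≤ m ∧ 1 ≤ n ∧
      w.toList = replicate m AB.a ++ replicate n AB.b ++ [AB.a, AB.a] := by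
  refine exists₂_congr fun m n => and_congr_right' <| and_congr_right' ?_
  rw [← FreeMonoid.toList.injective.eq_iff]
  simp [wa, wb, FreeMonoid.toList_of_pow]

lemma aaa_prefix_of_mem_L2 {w : Word} (hw : w ∈ L2) : [AB.a, AB.a, AB.a] <+: w.toList := by
  obtain ⟨m, n, hm, -, hw⟩ := (mem_L2_iff w).1 hw
  obtain ⟨k, rfl⟩ := Nat.exists_eq_add_of_le hm
  rw [hw, replicate_add, append_assoc, append_assoc]
  exact prefix_append _ _

lemma toList_eq_of_aaab_mul_mem_L2 {u : Word} (hu : wa ^ 3 * wb * u ∈ L2) :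
    ∃ n, u.toList = replicate n AB.b ++ [AB.a, AB.a] := by
  obtain ⟨m, n, hm, hn, hu⟩ := (mem_L2_iff _).1 hu
  obtain ⟨k, rfl⟩ := Nat.exists_eq_add_of_le hm
  obtain ⟨n, rfl⟩ := Nat.exists_eq_add_of_le' hn
  cases k with
  | zero => exact ⟨n, by simpa [wa, wb, FreeMonoid.toList_of_pow, replicate_succ] using hu⟩
  | succ k => simp [wa, wb, FreeMonoid.toList_of_pow, replicate_add, replicate_succ] at hu

lemma aaabaa_mem_L2 : wa ^ 3 * wb * wa ^ 2 ∈ L2 :=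
  ⟨3, 1, le_rfl, le_rfl, by rw [pow_one]⟩

theorem synClass_of_a_is_singleton_general (w : Word) :
    SynEq L2 w wa ↔ w = wa := by
  refine ⟨fun h => ?_, fun h _ _ => h ▸ Iff.rfl⟩
  have h₁ : wa ^ 3 * wb * w * wa ∈ L2 :=
    (h _ _).2 (by simpa [sq, mul_assoc] using aaabaa_mem_L2)
  have h₂ : wa ^ 2 * w * (wb * wa ^ 2) ∈ L2 :=
    (h _ _).2 (by simpa [pow_succ, mul_assoc] using aaabaa_mem_L2)
  obtain ⟨n, hn⟩ := toList_eq_of_aaab_mul_mem_L2 (by rwa [mul_assoc] at h₁)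
  have hw : w.toList = replicate n AB.b ++ [AB.a] := by
    rw [FreeMonoid.toList_mul, show [AB.a, AB.a] = [AB.a] ++ [AB.a] from rfl, ← append_assoc] at hn
    exact append_cancel_right hn
  have hpre := aaa_prefix_of_mem_L2 h₂
  cases n with
  | zero => exact FreeMonoid.toList.injective (by simpa [wa] using hw)
  | succ n => simp [wa, wb, hw, FreeMonoid.toList_of_pow, replicate_succ] at hpre

/-- the syntactic class of the letter `a` with respect to `L₂` is the
singleton `{a}`: a nonempty word `w` is syntactically equivalent to `a` iff `w = a`. -/
theorem synClass_of_a_is_singleton (w : Word) (hw : w ≠ 1) :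
    SynEq L2 w wa ↔ w = wa :=
  synClass_of_a_is_singleton_general w
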